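/- arXiv:math/0603708 — 9 statements merged into one kernel-verified Lean document; each statement's English description precedes it below -/
import Mathlib

section
/- Let n > 3 be odd. The integer m₀ = (n+1)/2 satisfies 1 < m₀ < n, gcd(m₀, n) = 1 and gcd(m₀ − 1, n) = 1; moreover, for every integer m with 1 < m < n, gcd(m, n) = 1 and gcd(m − 1, n) = 1, the loop L_n(m) is commutative — equivalently, m·j − (m−1)·i ≡ m·i − (m−1)·j (mod n) for all residues i, j modulo n — if and only if m = (n+1)/2. Hence the class L_n contains one and only one commutative loop. -/
/-!
Commutativity of `L_n(m)` says `(2m - 1)(j - i) = 0` for all `i, j`, i.e. `n ∣ 2m - 1`; since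
`0 < 2m - 1 < 2n`, this forces `2m - 1 = n`. Conversely `m₀ = (n + 1)/2` satisfies `2m₀ - n = 1`,
which is a Bézout relation making both `m₀` and `m₀ - 1` coprime to `n`.
-/

theorem forall_mul_sub_sub_mul_symm_iff {R : Type*} [CommRing R] (a : R) :
    (∀ i j : R, a * j - (a - 1) * i = a * i - (a - 1) * j) ↔ 2 * a - 1 = 0 := by
  refine ⟨fun h => ?_, fun h i j => by linear_combination (j - i) * h⟩
  linear_combination h 0 1

theorem ZMod.two_mul_natCast_sub_one_eq_zero_iff {n m : ℕ} (hm : 1 ≤ m) :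
    2 * (m : ZMod n) - 1 = 0 ↔ n ∣ 2 * m - 1 := by
  rw [← ZMod.natCast_eq_zero_iff, Nat.cast_sub (by omega)]
  push_cast
  rfl

theorem Nat.dvd_two_mul_sub_one_iff {n m : ℕ} (hodd : Odd n) (hm : 0 < m) (hmn : m < n) :
    n ∣ 2 * m - 1 ↔ m = (n + 1) / 2 := by
  obtain ⟨k, rfl⟩ := hodd
  refine ⟨fun h => ?_, fun h => ⟨1, by omega⟩⟩
  have := Nat.eq_of_dvd_of_lt_two_mul (by omega) h (by omega)
  omega

theorem Nat.coprime_and_coprime_sub_one_of_two_mul_eq_succ {n m : ℕ} (h : 2 * m = n + 1) :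
    Nat.Coprime m n ∧ Nat.Coprime (m - 1) n := by
  have hm : 1 ≤ m := by omega
  have hℤ : (2 * m : ℤ) = n + 1 := by exact_mod_cast h
  constructor
  · refine Nat.isCoprime_iff_coprime.mp ⟨2, -1, ?_⟩
    linear_combination hℤ
  · refine Nat.isCoprime_iff_coprime.mp ⟨-2, 1, ?_⟩
    push_cast [Nat.cast_sub hm]
    linear_combination -hℤ

/-- `Lₙ` contains one and only one commutative loop, namely `Lₙ((n+1)/2)`. -/
theorem stmt_1 (n : ℕ) (hn : 3 < n) (hodd : Odd n) :
    (1 < (n + 1) / 2 ∧ (n + 1) / 2 < n ∧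
      Nat.gcd ((n + 1) / 2) n = 1 ∧ Nat.gcd ((n + 1) / 2 - 1) n = 1) ∧
    ∀ m : ℕ, 1 < m → m < n → Nat.gcd m n = 1 → Nat.gcd (m - 1) n = 1 →
      ((∀ i j : ZMod n,
          (m : ZMod n) * j - ((m : ZMod n) - 1) * i
            = (m : ZMod n) * i - ((m : ZMod n) - 1) * j)
        ↔ m = (n + 1) / 2) := by
  have h₀ : 2 * ((n + 1) / 2) = n + 1 := by obtain ⟨k, rfl⟩ := hodd; omega
  obtain ⟨hcop, hcop'⟩ := Nat.coprime_and_coprime_sub_one_of_two_mul_eq_succ h₀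
  refine ⟨⟨by omega, by omega, hcop, hcop'⟩, fun m hm hmn _ _ => ?_⟩
  rw [forall_mul_sub_sub_mul_symm_iff, ZMod.two_mul_natCast_sub_one_eq_zero_iff hm.le,
    Nat.dvd_two_mul_sub_one_iff hodd (by omega) hmn]
end

section
/- Let n > 3 be an odd integer. The number of integers m with 0 ≤ m < n such that gcd(m, n) = 1, gcd(m − 1, n) = 1, and m·j − (m−1)·i ≢ m·i − (m−1)·j (mod n) for all distinct residues i, j modulo n — that is, the number of strictly non-commutative loops in L_n — equals the product, over the distinct prime divisors p of n, of (p − 3)·p^(ν_p(n) − 1), where ν_p(n) is the exponent of p in n. -/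
open Classical

open Finset


/-- The "good" predicate on elements of a commutative ring. -/
def goodP {R : Type*} [CommRing R] (a : R) : Prop :=
  IsUnit a ∧ IsUnit (a - 1) ∧ IsUnit (2 * a - 1)

noncomputable def Fcnt (n : ℕ) : ℕ := Nat.card {a : ZMod n // goodP a}

lemma isUnit_prod_iff {R S : Type*} [CommRing R] [CommRing S] (x : R) (y : S) :
    IsUnit ((x, y) : R × S) ↔ IsUnit x ∧ IsUnit y := by
  constructor
  · intro h
    exact ⟨h.map (RingHom.fst R S), h.map (RingHom.snd R S)⟩
  · rintro ⟨⟨u, rfl⟩, ⟨v, rfl⟩⟩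
    exact ⟨MulEquiv.prodUnits.symm (u, v), rfl⟩

lemma goodP_equiv {R S : Type*} [CommRing R] [CommRing S] (e : R ≃+* S) (a : R) :
    goodP (e a) ↔ goodP a := by
  have h : ∀ x : R, IsUnit (e x) ↔ IsUnit x := fun x =>
    ⟨fun h => by simpa using h.map e.symm.toRingHom, fun h => h.map e.toRingHom⟩
  have h1 : e a - 1 = e (a - 1) := by simp
  have h2 : 2 * e a - 1 = e (2 * a - 1) := by
    rw [map_sub, map_mul, map_one, map_ofNat]
  rw [goodP, goodP, h1, h2, h, h, h]

lemma goodP_prod {R S : Type*} [CommRing R] [CommRing S] (b : R × S) :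
    goodP b ↔ goodP b.1 ∧ goodP b.2 := by
  obtain ⟨x, y⟩ := b
  have h1 : ((x, y) : R × S) - 1 = (x - 1, y - 1) := rfl
  have h2 : 2 * ((x, y) : R × S) - 1 = (2 * x - 1, 2 * y - 1) := rfl
  rw [goodP, goodP, goodP, h1, h2, isUnit_prod_iff, isUnit_prod_iff, isUnit_prod_iff]
  tauto

lemma Fcnt_one : Fcnt 1 = 1 := by
  have h : ∀ a : ZMod 1, goodP a := fun a =>
    ⟨isUnit_of_subsingleton a, isUnit_of_subsingleton _, isUnit_of_subsingleton _⟩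
  rw [Fcnt, Nat.card_congr (Equiv.subtypeUnivEquiv h), Nat.card_zmod]

lemma Fcnt_mul {m n : ℕ} (h : Nat.Coprime m n) : Fcnt (m * n) = Fcnt m * Fcnt n := by
  have e := ZMod.chineseRemainder h
  rw [Fcnt, Fcnt, Fcnt, ← Nat.card_prod]
  apply Nat.card_congr
  exact (Equiv.subtypeEquiv e.toEquiv (fun a => (goodP_equiv e a).symm)).trans
    ((Equiv.subtypeEquivRight goodP_prod).trans
      (Equiv.subtypeProdEquivProd (p := fun x : ZMod m => goodP x) (q := fun y : ZMod n => goodP y)))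

lemma isUnit_pp_iff {p k : ℕ} (hp : p.Prime) (hk : k ≠ 0) (a : ZMod (p ^ k)) :
    IsUnit a ↔ IsUnit (ZMod.castHom (dvd_pow_self p hk) (ZMod p) a) := by
  haveI : Fact p.Prime := ⟨hp⟩
  haveI : NeZero (p ^ k) := ⟨pow_ne_zero k hp.ne_zero⟩
  haveI : NeZero p := ⟨hp.ne_zero⟩
  have hca : (ZMod.castHom (dvd_pow_self p hk) (ZMod p)) a = ((a.val : ℕ) : ZMod p) := by
    rw [ZMod.castHom_apply, ZMod.natCast_val]
  conv_lhs => rw [← ZMod.natCast_zmod_val a]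
  rw [hca, ZMod.isUnit_iff_coprime, ZMod.isUnit_iff_coprime,
    Nat.coprime_pow_right_iff (Nat.pos_of_ne_zero hk)]

lemma fiber_card {p k : ℕ} [NeZero p] [NeZero (p ^ k)] (hp : p.Prime) (hk : k ≠ 0) (x : ZMod p) :
    (univ.filter (fun a : ZMod (p ^ k) =>
      ZMod.castHom (dvd_pow_self p hk) (ZMod p) a = x)).card = p ^ (k - 1) := by
  haveI : Fact p.Prime := ⟨hp⟩
  set f := ZMod.castHom (dvd_pow_self p hk) (ZMod p) with hf
  have hsur : ∀ y : ZMod p, f (((y.val : ℕ) : ZMod (p ^ k))) = y := by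
    intro y; rw [map_natCast, ZMod.natCast_zmod_val]
  have hc : ∀ y : ZMod p,
      (univ.filter (fun a => f a = y)).card = (univ.filter (fun a => f a = 0)).card := by
    intro y
    apply Finset.card_nbij' (fun a => a - ((y.val : ℕ) : ZMod (p ^ k)))
      (fun a => a + ((y.val : ℕ) : ZMod (p ^ k)))
    · intro a ha; simp only [Finset.mem_coe, mem_filter, mem_univ, true_and] at ha ⊢
      rw [map_sub, ha, hsur, sub_self]
    · intro a ha; simp only [Finset.mem_coe, mem_filter, mem_univ, true_and] at ha ⊢
      rw [map_add, ha, hsur, zero_add]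
    · intro a _; ring
    · intro a _; ring
  have hsum : ∑ y : ZMod p, (univ.filter (fun a : ZMod (p ^ k) => f a = y)).card = p ^ k := by
    rw [← Finset.card_eq_sum_card_fiberwise (fun a _ => mem_univ (f a))]
    rw [Finset.card_univ, ZMod.card]
  rw [Finset.sum_congr rfl (fun y _ => hc y), Finset.sum_const, Finset.card_univ,
    ZMod.card, smul_eq_mul] at hsum
  rw [hc x]
  have hpk : p * p ^ (k - 1) = p ^ k := by
    rw [← pow_succ']; congr 1; omega
  apply Nat.eq_of_mul_eq_mul_left hp.pos
  rw [hsum, hpk]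

lemma count_modp {p : ℕ} [NeZero p] (hp : p.Prime) (hp2 : p ≠ 2) :
    (univ.filter (fun x : ZMod p => goodP x)).card = p - 3 := by
  haveI : Fact p.Prime := ⟨hp⟩
  have h2 : (2 : ZMod p) ≠ 0 := by
    have h : ((2 : ℕ) : ZMod p) ≠ 0 := by
      rw [Ne, ZMod.natCast_eq_zero_iff]
      intro h; exact hp2 ((Nat.prime_dvd_prime_iff_eq hp Nat.prime_two).mp h)
    simpa using h
  have hinv0 : (2 : ZMod p)⁻¹ ≠ 0 := inv_ne_zero h2
  have hinv1 : (2 : ZMod p)⁻¹ ≠ 1 := by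
    intro h
    have h12 : (1 : ZMod p) = 2 := by
      calc (1 : ZMod p) = 2 * 2⁻¹ := (mul_inv_cancel₀ h2).symm
      _ = 2 * 1 := by rw [h]
      _ = 2 := mul_one 2
    exact one_ne_zero (α := ZMod p) (by linear_combination -h12)
  have hgood : ∀ x : ZMod p, goodP x ↔ ¬ (x = 0 ∨ x = 1 ∨ x = (2 : ZMod p)⁻¹) := by
    intro x
    rw [goodP, isUnit_iff_ne_zero, isUnit_iff_ne_zero, isUnit_iff_ne_zero,
      sub_ne_zero, sub_ne_zero]
    constructor
    · rintro ⟨h0, h1, h2x⟩ (rfl | rfl | rfl)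
      exacts [h0 rfl, h1 rfl, h2x (mul_inv_cancel₀ h2)]
    · intro h
      refine ⟨fun h0 => h (Or.inl h0), fun h1 => h (Or.inr (Or.inl h1)), fun hx => ?_⟩
      exact h (Or.inr (Or.inr (eq_inv_of_mul_eq_one_right hx)))
  have c0 : (0 : ZMod p) ∉ ({1, (2 : ZMod p)⁻¹} : Finset (ZMod p)) := by
    simp only [mem_insert, mem_singleton]
    push_neg
    exact ⟨zero_ne_one, Ne.symm hinv0⟩
  have c1 : (1 : ZMod p) ∉ ({(2 : ZMod p)⁻¹} : Finset (ZMod p)) := by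
    simp only [mem_singleton]
    exact Ne.symm hinv1
  have hset : (univ.filter (fun x : ZMod p => goodP x))
      = ({0, 1, (2 : ZMod p)⁻¹} : Finset (ZMod p))ᶜ := by
    ext x
    simp only [mem_filter, mem_univ, true_and, Finset.mem_compl, mem_insert, mem_singleton,
      hgood x]
  rw [hset, Finset.card_compl, ZMod.card, Finset.card_insert_of_notMem c0,
    Finset.card_insert_of_notMem c1, Finset.card_singleton]

lemma Fcnt_pp {p k : ℕ} (hp : p.Prime) (hp2 : p ≠ 2) (hk : k ≠ 0) :
    Fcnt (p ^ k) = (p - 3) * p ^ (k - 1) := by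
  haveI : Fact p.Prime := ⟨hp⟩
  haveI : NeZero p := ⟨hp.ne_zero⟩
  haveI : NeZero (p ^ k) := ⟨pow_ne_zero k hp.ne_zero⟩
  set f := ZMod.castHom (dvd_pow_self p hk) (ZMod p) with hf
  have hgf : ∀ a : ZMod (p ^ k), goodP a ↔ goodP (f a) := by
    intro a
    have e1 : f a - 1 = f (a - 1) := by rw [map_sub, map_one]
    have e2 : 2 * f a - 1 = f (2 * a - 1) := by rw [map_sub, map_mul, map_one, map_ofNat]
    rw [goodP, goodP, e1, e2, ← isUnit_pp_iff hp hk a, ← isUnit_pp_iff hp hk (a - 1),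
      ← isUnit_pp_iff hp hk (2 * a - 1)]
  have h1 : Fcnt (p ^ k) = (univ.filter (fun a : ZMod (p ^ k) => goodP a)).card := by
    rw [Fcnt, Nat.card_eq_fintype_card, Fintype.card_subtype]
  rw [h1, Finset.card_eq_sum_card_fiberwise
    (f := fun a => f a) (t := univ.filter (fun x : ZMod p => goodP x))
    (fun a ha => by simp only [Finset.mem_coe, mem_filter, mem_univ, true_and] at ha ⊢; exact (hgf a).mp ha)]
  have hfib : ∀ x ∈ univ.filter (fun x : ZMod p => goodP x),
      ((univ.filter (fun a : ZMod (p ^ k) => goodP a)).filter (fun a => f a = x)).card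
        = p ^ (k - 1) := by
    intro x hx
    simp only [mem_filter, mem_univ, true_and] at hx
    have hfilter : (univ.filter (fun a : ZMod (p ^ k) => goodP a)).filter (fun a => f a = x)
        = univ.filter (fun a : ZMod (p ^ k) => f a = x) := by
      ext a
      simp only [Finset.filter_filter, mem_filter, mem_univ, true_and]
      constructor
      · rintro ⟨-, h⟩; exact h
      · intro hfa
        refine ⟨(hgf a).mpr ?_, hfa⟩
        rw [hfa]; exact hx
    rw [hfilter, fiber_card hp hk x]
  rw [Finset.sum_congr rfl hfib, Finset.sum_const, smul_eq_mul, count_modp hp hp2]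

lemma noncomm_iff {n : ℕ} [NeZero n] (a : ZMod n) :
    (∀ i j : ZMod n, i ≠ j → a * j - (a - 1) * i ≠ a * i - (a - 1) * j)
      ↔ IsUnit (2 * a - 1) := by
  constructor
  · intro h
    have hinj : Function.Injective (fun x : ZMod n => (2 * a - 1) * x) := by
      intro x y hxy
      by_contra hne
      exact h x y hne (by linear_combination -hxy)
    obtain ⟨x, hx⟩ := Finite.surjective_of_injective hinj 1
    exact IsUnit.of_mul_eq_one x hx
  · intro hu i j hij heq
    have h0 : (2 * a - 1) * (j - i) = 0 := by linear_combination heq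
    exact hij (sub_eq_zero.mp (hu.mul_right_eq_zero.mp h0)).symm

lemma cond_iff {n : ℕ} (hn : 3 < n) (m : ℕ) :
    (Nat.gcd m n = 1 ∧ Nat.gcd (m - 1) n = 1 ∧
        ∀ i j : ZMod n, i ≠ j →
          (m : ZMod n) * j - ((m : ZMod n) - 1) * i ≠ (m : ZMod n) * i - ((m : ZMod n) - 1) * j)
      ↔ goodP ((m : ZMod n)) := by
  haveI : NeZero n := ⟨by omega⟩
  haveI : Fact (1 < n) := ⟨by omega⟩
  rcases Nat.eq_zero_or_pos m with rfl | hm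
  · constructor
    · rintro ⟨h1, -, -⟩
      simp only [Nat.gcd_zero_left] at h1
      omega
    · rintro ⟨h1, -, -⟩
      rw [Nat.cast_zero] at h1
      exact (not_isUnit_zero h1).elim
  · have e1 : Nat.gcd m n = 1 ↔ IsUnit ((m : ZMod n)) :=
      (ZMod.isUnit_iff_coprime m n).symm
    have ecast : ((m - 1 : ℕ) : ZMod n) = (m : ZMod n) - 1 := by
      rw [Nat.cast_sub hm, Nat.cast_one]
    have e2 : Nat.gcd (m - 1) n = 1 ↔ IsUnit ((m : ZMod n) - 1) := by
      rw [← ecast]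
      exact (ZMod.isUnit_iff_coprime (m - 1) n).symm
    rw [goodP, ← e1, ← e2, noncomm_iff]

/-- The number of strictly non-commutative loops in the class `Lₙ` equals
`∏_{p ∣ n} (p-3)·p^(ν_p(n)-1)`. -/
theorem stmt_2 (n : ℕ) (hn : 3 < n) (hodd : Odd n) :
    ((Finset.range n).filter
        (fun m => Nat.gcd m n = 1 ∧ Nat.gcd (m - 1) n = 1 ∧
          ∀ i j : ZMod n, i ≠ j →
            (m : ZMod n) * j - ((m : ZMod n) - 1) * i
              ≠ (m : ZMod n) * i - ((m : ZMod n) - 1) * j)).card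
      = ∏ p ∈ n.primeFactors, (p - 3) * p ^ (n.factorization p - 1) := by
  have hbij : ((Finset.range n).filter
        (fun m => Nat.gcd m n = 1 ∧ Nat.gcd (m - 1) n = 1 ∧
          ∀ i j : ZMod n, i ≠ j →
            (m : ZMod n) * j - ((m : ZMod n) - 1) * i
              ≠ (m : ZMod n) * i - ((m : ZMod n) - 1) * j)).card
      = Fcnt n := by
    haveI : NeZero n := ⟨by omega⟩
    rw [Fcnt, Nat.card_eq_fintype_card, Fintype.card_subtype]
    refine Finset.card_nbij' (fun m => ((m : ℕ) : ZMod n)) (fun a => a.val) ?_ ?_ ?_ ?_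
    · intro m hm
      simp only [Finset.mem_coe, mem_filter, mem_univ, true_and, Finset.mem_range] at hm ⊢
      exact (cond_iff hn m).mp hm.2
    · intro a ha
      simp only [Finset.mem_coe, mem_filter, mem_univ, true_and, Finset.mem_range] at ha ⊢
      refine ⟨ZMod.val_lt a, (cond_iff hn a.val).mpr ?_⟩
      rw [ZMod.natCast_zmod_val]
      exact ha
    · intro m hm
      simp only [Finset.mem_coe, mem_filter, Finset.mem_range] at hm
      exact ZMod.val_cast_of_lt hm.1
    · intro a _
      exact ZMod.natCast_zmod_val a
  rw [hbij,
    Nat.multiplicative_factorization Fcnt (fun x y h => Fcnt_mul h) Fcnt_one (by omega : n ≠ 0),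
    Nat.prod_factorization_eq_prod_primeFactors]
  apply Finset.prod_congr rfl
  intro p hpmem
  have hp := Nat.prime_of_mem_primeFactors hpmem
  have hdvd := Nat.dvd_of_mem_primeFactors hpmem
  have hp2 : p ≠ 2 := by
    rintro rfl
    obtain ⟨c, rfl⟩ := hdvd
    rw [Nat.odd_iff] at hodd
    omega
  have hk : n.factorization p ≠ 0 :=
    (Nat.Prime.factorization_pos_of_dvd hp (by omega) hdvd).ne'
  exact Fcnt_pp hp hp2 hk
end

section
/- Let n > 3 be an odd integer divisible by 3. Then the class L_n contains no strictly non-commutative loop: for every integer m with 1 < m < n, gcd(m, n) = 1 and gcd(m − 1, n) = 1, there exist distinct residues i, j modulo n with m·j − (m−1)·i ≡ m·i − (m−1)·j (mod n). -/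
/-!
The products `i * j` and `j * i` agree exactly when `(2m - 1)(j - i) = 0` in `ℤ/nℤ`.
Since `3 ∣ n`, the coprimality conditions force `m ≢ 0, 1 (mod 3)`, so `m ≡ 2` and `3 ∣ 2m - 1`;
then `i = 0`, `j = n / 3` are distinct residues that commute.
-/

theorem three_dvd_two_mul_sub_one_of_coprime {m n : ℕ} (h3 : 3 ∣ n)
    (hm : Nat.Coprime m n) (hm1 : Nat.Coprime (m - 1) n) : (3 : ℤ) ∣ 2 * m - 1 := by
  have h3m : ¬ 3 ∣ m := fun h ↦ by
    have := Nat.eq_one_of_dvd_coprimes hm h h3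
    omega
  have h3m1 : ¬ 3 ∣ m - 1 := fun h ↦ by
    have := Nat.eq_one_of_dvd_coprimes hm1 h h3
    omega
  have hmod : m % 3 = 2 := by omega
  omega

theorem ZMod.natCast_div_ne_zero {n d : ℕ} (hn : 0 < n) (hd : 1 < d) (hdn : d ∣ n) :
    ((n / d : ℕ) : ZMod n) ≠ 0 := by
  rw [Ne, ZMod.natCast_eq_zero_iff]
  intro h
  have hzero : n / d = 0 := Nat.eq_zero_of_dvd_of_lt h (Nat.div_lt_self hn hd)
  have := Nat.div_mul_cancel hdn
  simp only [hzero, zero_mul] at this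
  omega

theorem ZMod.intCast_mul_natCast_div_eq_zero {n d : ℕ} {a : ℤ} (hdn : d ∣ n) (hda : (d : ℤ) ∣ a) :
    (a : ZMod n) * ((n / d : ℕ) : ZMod n) = 0 := by
  obtain ⟨t, rfl⟩ := hda
  have hn : ((d * (n / d) : ℕ) : ZMod n) = 0 := by
    rw [Nat.mul_div_cancel' hdn, ZMod.natCast_self]
  push_cast at hn ⊢
  linear_combination (t : ZMod n) * hn

theorem stmt_3_general (n : ℕ) (h3 : 3 ∣ n) :
    ∀ m : ℕ, 1 < m → m < n → Nat.gcd m n = 1 → Nat.gcd (m - 1) n = 1 →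
      ∃ i j : ZMod n, i ≠ j ∧
        (m : ZMod n) * j - ((m : ZMod n) - 1) * i
          = (m : ZMod n) * i - ((m : ZMod n) - 1) * j := by
  intro m _ hmn hg1 hg2
  refine ⟨0, ((n / 3 : ℕ) : ZMod n), (ZMod.natCast_div_ne_zero (by omega) (by norm_num) h3).symm, ?_⟩
  have hvanish := ZMod.intCast_mul_natCast_div_eq_zero (n := n) h3
    (three_dvd_two_mul_sub_one_of_coprime h3 hg1 hg2)
  push_cast at hvanish
  linear_combination hvanish

/-- If `3 ∣ n` then the class `Lₙ` contains no strictly non-commutative loop. -/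
theorem stmt_3 (n : ℕ) (hn : 3 < n) (hodd : Odd n) (h3 : 3 ∣ n) :
    ∀ m : ℕ, 1 < m → m < n → Nat.gcd m n = 1 → Nat.gcd (m - 1) n = 1 →
      ∃ i j : ZMod n, i ≠ j ∧
        (m : ZMod n) * j - ((m : ZMod n) - 1) * i
          = (m : ZMod n) * i - ((m : ZMod n) - 1) * j :=
  stmt_3_general n h3
end

section
/- Let n > 3 be odd and let m be an integer with 1 < m < n, gcd(m, n) = 1 and gcd(m − 1, n) = 1. Then L_n(m) is right alternative — equivalently, m·y − (m−1)·(m·y − (m−1)·x) ≡ x (mod n) for all distinct residues x, y modulo n — if and only if m = 2. Moreover m = 2 satisfies gcd(2, n) = 1 and gcd(1, n) = 1 (n being odd), so the class L_n contains exactly one right alternative loop, namely L_n(2). -/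
/-!
The defect of the right alternative law factors as
`a y - (a - 1)(a y - (a - 1) x) - x = a (a - 2) (x - y)`,
so the law holds for all distinct `x, y` exactly when `a (a - 2) = 0`. In `ZMod n` the
multiplier `m` is a unit, hence this means `m ≡ 2 (mod n)`, i.e. `m = 2` since `m, 2 < n`.
-/

theorem rightAlternative_defect {R : Type*} [CommRing R] (a x y : R) :
    a * y - (a - 1) * (a * y - (a - 1) * x) - x = a * (a - 2) * (x - y) := by
  ring

theorem forall_ne_rightAlternative_iff {R : Type*} [CommRing R] [Nontrivial R] (a : R) :
    (∀ x y : R, x ≠ y → a * y - (a - 1) * (a * y - (a - 1) * x) = x) ↔ a * (a - 2) = 0 := by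
  constructor
  · intro h
    have h10 := sub_eq_zero.2 (h 1 0 one_ne_zero)
    rwa [rightAlternative_defect, sub_zero, mul_one] at h10
  · intro h x y _
    rw [← sub_eq_zero, rightAlternative_defect, h, zero_mul]

theorem IsUnit.mul_sub_eq_zero_iff {R : Type*} [CommRing R] {a : R} (ha : IsUnit a) (b : R) :
    a * (a - b) = 0 ↔ a = b := by
  rw [ha.mul_right_eq_zero, sub_eq_zero]

theorem ZMod.natCast_eq_natCast_iff_of_lt {n a b : ℕ} (ha : a < n) (hb : b < n) :
    (a : ZMod n) = b ↔ a = b := by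
  rw [ZMod.natCast_eq_natCast_iff', Nat.mod_eq_of_lt ha, Nat.mod_eq_of_lt hb]

/-- `Lₙ` contains exactly one right alternative loop, namely `Lₙ(2)`. -/
theorem stmt_4 (n : ℕ) (hn : 3 < n) (hodd : Odd n) :
    (1 < 2 ∧ 2 < n ∧ Nat.gcd 2 n = 1 ∧ Nat.gcd 1 n = 1) ∧
    ∀ m : ℕ, 1 < m → m < n → Nat.gcd m n = 1 → Nat.gcd (m - 1) n = 1 →
      ((∀ x y : ZMod n, x ≠ y →
          (m : ZMod n) * y
              - ((m : ZMod n) - 1) * ((m : ZMod n) * y - ((m : ZMod n) - 1) * x)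
            = x)
        ↔ m = 2) := by
  refine ⟨⟨one_lt_two, by omega, Nat.coprime_two_left.2 hodd, Nat.gcd_one_left n⟩, ?_⟩
  intro m _ hmn hcop _
  have : Nontrivial (ZMod n) := ZMod.nontrivial_iff.2 (by omega)
  have hunit : IsUnit (m : ZMod n) := (ZMod.isUnit_iff_coprime m n).2 hcop
  rw [forall_ne_rightAlternative_iff, hunit.mul_sub_eq_zero_iff, ← Nat.cast_ofNat,
    ZMod.natCast_eq_natCast_iff_of_lt hmn (by omega)]
end

section
/- Let n > 3 be odd and let m be an integer with 1 < m < n, gcd(m, n) = 1 and gcd(m − 1, n) = 1. Then L_n(m) is left alternative — equivalently, m·(m·y − (m−1)·x) − (m−1)·x ≡ y (mod n) for all distinct residues x, y modulo n — if and only if m = n − 1. Moreover m = n − 1 satisfies gcd(n−1, n) = 1 and gcd(n−2, n) = 1 (n being odd), so the class L_n contains exactly one left alternative loop, namely L_n(n−1). -/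
/-!
Expanding, `m (m y - (m - 1) x) - (m - 1) x = y + (m² - 1)(y - x)`, so the left alternative law
holds for all distinct `x, y` exactly when `m² = 1`. Since `m - 1` is a unit modulo `n`, the
factorisation `m² - 1 = (m - 1)(m + 1)` forces `m ≡ -1`, i.e. `m = n - 1` for `0 ≤ m < n`.
-/

section CommRing

variable {R : Type*} [CommRing R]

lemma left_alternative_expr_eq (m x y : R) :
    m * (m * y - (m - 1) * x) - (m - 1) * x = y + (m ^ 2 - 1) * (y - x) := by
  ring

lemma forall_ne_left_alternative_iff_sq_eq_one [Nontrivial R] (m : R) :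
    (∀ x y : R, x ≠ y → m * (m * y - (m - 1) * x) - (m - 1) * x = y) ↔ m ^ 2 = 1 := by
  simp only [left_alternative_expr_eq, add_eq_left]
  constructor
  · intro h
    simpa [sub_eq_zero] using h 0 1 zero_ne_one
  · intro h x y _
    rw [h, sub_self, zero_mul]

lemma sq_eq_one_iff_eq_neg_one_of_isUnit_sub_one {m : R} (h : IsUnit (m - 1)) :
    m ^ 2 = 1 ↔ m = -1 := by
  rw [← sub_eq_zero, show m ^ 2 - 1 = (m - 1) * (m + 1) by ring, h.mul_right_eq_zero,
    add_eq_zero_iff_eq_neg]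

end CommRing

lemma ZMod.natCast_eq_neg_one_iff_of_lt {m n : ℕ} (hmn : m < n) :
    (m : ZMod n) = -1 ↔ m = n - 1 := by
  rw [eq_neg_iff_add_eq_zero, ← Nat.cast_add_one, ZMod.natCast_eq_zero_iff]
  constructor
  · intro hdvd
    have := Nat.le_of_dvd m.succ_pos hdvd
    omega
  · intro hm
    rw [hm, Nat.sub_add_cancel (by omega)]

lemma ZMod.isUnit_natCast_sub_one {m n : ℕ} (hm : 1 ≤ m) (hcop : Nat.gcd (m - 1) n = 1) :
    IsUnit ((m : ZMod n) - 1) := by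
  simpa [Nat.cast_sub hm] using (ZMod.isUnit_iff_coprime (m - 1) n).2 hcop

/-- `Lₙ` contains exactly one left alternative loop, namely `Lₙ(n-1)`. -/
theorem stmt_5 (n : ℕ) (hn : 3 < n) (hodd : Odd n) :
    (1 < n - 1 ∧ n - 1 < n ∧ Nat.gcd (n - 1) n = 1 ∧ Nat.gcd (n - 2) n = 1) ∧
    ∀ m : ℕ, 1 < m → m < n → Nat.gcd m n = 1 → Nat.gcd (m - 1) n = 1 →
      ((∀ x y : ZMod n, x ≠ y →
          (m : ZMod n) * ((m : ZMod n) * y - ((m : ZMod n) - 1) * x)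
              - ((m : ZMod n) - 1) * x
            = y)
        ↔ m = n - 1) := by
  refine ⟨⟨by omega, by omega, ?_, ?_⟩, ?_⟩
  · exact (Nat.coprime_self_sub_left (by omega)).2 (Nat.coprime_one_left n)
  · exact (Nat.coprime_self_sub_left (by omega)).2 (Nat.coprime_two_left.2 hodd)
  · intro m hm1 hmn _ hcop
    have : Fact (1 < n) := ⟨by omega⟩
    rw [forall_ne_left_alternative_iff_sq_eq_one,
      sq_eq_one_iff_eq_neg_one_of_isUnit_sub_one (ZMod.isUnit_natCast_sub_one hm1.le hcop),
      ZMod.natCast_eq_neg_one_iff_of_lt hmn]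
end

section
/- Let n > 3 be odd. The class L_n contains no alternative loop: there is no integer m with 1 < m < n, gcd(m, n) = 1 and gcd(m − 1, n) = 1 for which both m·y − (m−1)·(m·y − (m−1)·x) ≡ x (mod n) and m·(m·y − (m−1)·x) − (m−1)·x ≡ y (mod n) hold for all distinct residues x, y modulo n, i.e., no L_n(m) is simultaneously right alternative and left alternative. -/
/-! Evaluating both alternative laws at `x = 0`, `y = 1` already forces `m² = 1` (left) and
`2m = m²` (right), hence `2m = 1`; squaring, `4 = 1`, so `3 = 0` in `ℤ/nℤ`, impossible for
`n > 3`. -/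

theorem three_eq_zero_of_alternative {R : Type*} [CommRing R] [Nontrivial R] {m : R}
    (hR : ∀ x y : R, x ≠ y → m * y - (m - 1) * (m * y - (m - 1) * x) = x)
    (hL : ∀ x y : R, x ≠ y → m * (m * y - (m - 1) * x) - (m - 1) * x = y) :
    (3 : R) = 0 := by
  have hsq : m * m = 1 := by simpa using hL 0 1 zero_ne_one
  have htwo : 2 * m = 1 := by
    linear_combination hR 0 1 zero_ne_one + hsq
  linear_combination (2 * m + 1) * htwo - 4 * hsq

theorem ZMod.le_three_of_three_eq_zero {n : ℕ} (h : (3 : ZMod n) = 0) : n ≤ 3 :=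
  Nat.le_of_dvd three_pos <| (ZMod.natCast_eq_zero_iff 3 n).mp <| by exact_mod_cast h

theorem stmt_6_general (n : ℕ) (hn : 3 < n) :
    ¬ ∃ m : ℕ, 1 < m ∧ m < n ∧ Nat.gcd m n = 1 ∧ Nat.gcd (m - 1) n = 1 ∧
      (∀ x y : ZMod n, x ≠ y →
        (m : ZMod n) * y
            - ((m : ZMod n) - 1) * ((m : ZMod n) * y - ((m : ZMod n) - 1) * x)
          = x) ∧
      (∀ x y : ZMod n, x ≠ y →
        (m : ZMod n) * ((m : ZMod n) * y - ((m : ZMod n) - 1) * x)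
            - ((m : ZMod n) - 1) * x
          = y) := by
  rintro ⟨m, -, -, -, -, hR, hL⟩
  have : Fact (1 < n) := ⟨by omega⟩
  have := ZMod.le_three_of_three_eq_zero (three_eq_zero_of_alternative hR hL)
  omega

/-- The class `Lₙ` contains no alternative loop: no `Lₙ(m)` is simultaneously
right alternative and left alternative. -/
theorem stmt_6 (n : ℕ) (hn : 3 < n) (hodd : Odd n) :
    ¬ ∃ m : ℕ, 1 < m ∧ m < n ∧ Nat.gcd m n = 1 ∧ Nat.gcd (m - 1) n = 1 ∧
      (∀ x y : ZMod n, x ≠ y →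
        (m : ZMod n) * y
            - ((m : ZMod n) - 1) * ((m : ZMod n) * y - ((m : ZMod n) - 1) * x)
          = x) ∧
      (∀ x y : ZMod n, x ≠ y →
        (m : ZMod n) * ((m : ZMod n) * y - ((m : ZMod n) - 1) * x)
            - ((m : ZMod n) - 1) * x
          = y) :=
  stmt_6_general n hn
end

section
/- Let n > 3 be odd and let m be an integer with 1 < m < n, gcd(m, n) = 1 and gcd(m − 1, n) = 1. Then L_n(m) is a weak inverse property (WIP) loop — equivalently, m·(m·y − (m−1)·x) − (m−1)·y ≡ x (mod n) for all distinct residues x, y modulo n — if and only if m² − m + 1 ≡ 0 (mod n). -/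
theorem mul_mul_sub_sub_sub_eq {R : Type*} [CommRing R] (m x y : R) :
    m * (m * y - (m - 1) * x) - (m - 1) * y - x = (m ^ 2 - m + 1) * (y - x) := by
  ring

theorem forall_ne_mul_sub_eq_zero_iff {R : Type*} [CommRing R] [Nontrivial R] (c : R) :
    (∀ x y : R, x ≠ y → c * (y - x) = 0) ↔ c = 0 := by
  refine ⟨fun h => ?_, fun hc x y _ => by rw [hc, zero_mul]⟩
  simpa using h 0 1 zero_ne_one

theorem stmt_7_general (n m : ℕ) (hn : 3 < n) :
    (∀ x y : ZMod n, x ≠ y →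
        (m : ZMod n) * ((m : ZMod n) * y - ((m : ZMod n) - 1) * x)
            - ((m : ZMod n) - 1) * y
          = x)
      ↔ (m : ZMod n) ^ 2 - (m : ZMod n) + 1 = 0 := by
  have : Fact (1 < n) := ⟨by omega⟩
  simp only [← sub_eq_zero (a := _ - _ * _), mul_mul_sub_sub_sub_eq]
  exact forall_ne_mul_sub_eq_zero_iff _

/-- `Lₙ(m)` is a weak inverse property loop iff `m² - m + 1 ≡ 0 (mod n)`. -/
theorem stmt_7 (n m : ℕ) (hn : 3 < n) (hodd : Odd n) (hm1 : 1 < m) (hm2 : m < n)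
    (hg1 : Nat.gcd m n = 1) (hg2 : Nat.gcd (m - 1) n = 1) :
    (∀ x y : ZMod n, x ≠ y →
        (m : ZMod n) * ((m : ZMod n) * y - ((m : ZMod n) - 1) * x)
            - ((m : ZMod n) - 1) * y
          = x)
      ↔ (m : ZMod n) ^ 2 - (m : ZMod n) + 1 = 0 :=
  stmt_7_general n m hn
end

section
/- Let n ≥ 3 and let t, u be nonzero, distinct, coprime elements of Z_n (represented by integers with 0 < t, u < n and gcd(t, u) = 1). The groupoid Z_n(t, u), with operation a * b = t·a + u·b (mod n), is a semigroup (i.e., * is associative) if and only if t² ≡ t (mod n) and u² ≡ u (mod n). -/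
/-! Expanding both sides, `t(ta + ub) + uc = ta + u(tb + uc)` reduces to
`(t² - t)a = (u² - u)c`; for this to hold for all `a, c` it is necessary (take `(a, c) = (1, 0)`
and `(0, 1)`) and sufficient that `t² = t` and `u² = u`. -/

theorem affine_op_assoc_iff {R : Type*} [CommRing R] (t u : R) :
    (∀ a b c : R, t * (t * a + u * b) + u * c = t * a + u * (t * b + u * c)) ↔
      (t * t = t ∧ u * u = u) := by
  constructor
  · intro h
    have hac := h 1 0 0
    have hca := h 0 0 1
    exact ⟨by linear_combination hac, by linear_combination -hca⟩
  · rintro ⟨htt, huu⟩ a b c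
    linear_combination a * htt - c * huu

theorem ZMod.natCast_mul_self_eq_iff {n k : ℕ} :
    (k : ZMod n) * k = k ↔ k * k ≡ k [MOD n] := by
  rw [← Nat.cast_mul, ZMod.natCast_eq_natCast_iff]

theorem stmt_11_general (n t u : ℕ) :
    (∀ a b c : ZMod n,
        (t : ZMod n) * ((t : ZMod n) * a + (u : ZMod n) * b) + (u : ZMod n) * c
          = (t : ZMod n) * a + (u : ZMod n) * ((t : ZMod n) * b + (u : ZMod n) * c))
      ↔ (t * t ≡ t [MOD n] ∧ u * u ≡ u [MOD n]) := by
  rw [affine_op_assoc_iff, ZMod.natCast_mul_self_eq_iff, ZMod.natCast_mul_self_eq_iff]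

/-- The groupoid `Zₙ(t,u)` with `a * b = t·a + u·b (mod n)` is a semigroup iff
`t² ≡ t (mod n)` and `u² ≡ u (mod n)`. -/
theorem stmt_11 (n t u : ℕ) (hn : 3 ≤ n) (ht : 0 < t) (ht' : t < n)
    (hu : 0 < u) (hu' : u < n) (htu : t ≠ u) (hcop : Nat.gcd t u = 1) :
    (∀ a b c : ZMod n,
        (t : ZMod n) * ((t : ZMod n) * a + (u : ZMod n) * b) + (u : ZMod n) * c
          = (t : ZMod n) * a + (u : ZMod n) * ((t : ZMod n) * b + (u : ZMod n) * c))
      ↔ (t * t ≡ t [MOD n] ∧ u * u ≡ u [MOD n]) :=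
  stmt_11_general n t u
end

section
/- Let n be an even integer with n ≥ 4 (say n = 2m), let t be an integer with 0 < t < n and t dividing n, and set u = n − t (so that gcd(t, u) = t and t + u = n). Then the set t·Z_n = {t·x (mod n) : x ∈ Z_n} is closed under the operation of the groupoid Z_n(t, u) (hence is a subgroupoid) and has exactly n/t elements. -/
open Set

theorem linearCombination_mem_range_mul_left {R : Type*} [CommSemiring R] (a s r : R) {x y : R}
    (hx : x ∈ range (a * ·)) (hy : y ∈ range (a * ·)) : s * x + r * y ∈ range (a * ·) := by
  obtain ⟨x, rfl⟩ := hx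
  obtain ⟨y, rfl⟩ := hy
  exact ⟨s * x + r * y, by ring⟩

theorem ZMod.range_mul_left_eq_zmultiples {n : ℕ} (a : ZMod n) :
    range (a * ·) = (AddSubgroup.zmultiples a : Set (ZMod n)) := by
  ext z
  constructor
  · rintro ⟨y, rfl⟩
    refine ⟨y.cast, ?_⟩
    simp only [zsmul_eq_mul, ZMod.intCast_zmod_cast, mul_comm]
  · rintro ⟨k, rfl⟩
    exact ⟨k, by simp only [zsmul_eq_mul, mul_comm]⟩

theorem ZMod.natCard_range_natCast_mul_left {n : ℕ} (hn : n ≠ 0) (t : ℕ) :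
    Nat.card (range ((t : ZMod n) * ·)) = n / n.gcd t := by
  rw [ZMod.range_mul_left_eq_zmultiples, SetLike.coe_sort_coe, Nat.card_zmultiples,
    ZMod.addOrderOf_coe t hn]

theorem stmt_17_general (n t : ℕ)
    (ht' : t < n) (hdvd : t ∣ n) :
    (∀ a ∈ Set.range (fun y : ZMod n => (t : ZMod n) * y),
      ∀ b ∈ Set.range (fun y : ZMod n => (t : ZMod n) * y),
        (t : ZMod n) * a + ((n - t : ℕ) : ZMod n) * b
          ∈ Set.range (fun y : ZMod n => (t : ZMod n) * y)) ∧
    Nat.card (Set.range (fun y : ZMod n => (t : ZMod n) * y)) = n / t :=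
  ⟨fun _ ha _ hb => linearCombination_mem_range_mul_left _ _ _ ha hb, by
    rw [ZMod.natCard_range_natCast_mul_left (by omega), Nat.gcd_eq_right hdvd]⟩

/-- If `n = 2m` is even, `t ∣ n`, `0 < t < n` and `u = n - t`, then `t·Zₙ` is a
subgroupoid of `Zₙ(t, n-t)` of order `n / t`. -/
theorem stmt_17 (n t : ℕ) (hn : 4 ≤ n) (heven : Even n) (ht : 0 < t)
    (ht' : t < n) (hdvd : t ∣ n) :
    (∀ a ∈ Set.range (fun y : ZMod n => (t : ZMod n) * y),
      ∀ b ∈ Set.range (fun y : ZMod n => (t : ZMod n) * y),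
        (t : ZMod n) * a + ((n - t : ℕ) : ZMod n) * b
          ∈ Set.range (fun y : ZMod n => (t : ZMod n) * y)) ∧
    Nat.card (Set.range (fun y : ZMod n => (t : ZMod n) * y)) = n / t :=
  stmt_17_general n t ht' hdvd
end
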